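/- arXiv:1809.08029 — 8 statements merged into one kernel-verified Lean document; each statement's English description precedes it below -/
import Mathlib

section
/- Let μ be a Radon measure on ℝ, c ∈ ℝ, κ ∈ ℝ, and let g : ℝ → ℝ be a locally bounded measurable function satisfying g(x) = g(c) + κ(x − c) + ∫ (x ∨ y − c ∨ y) g(y) dμ(y) for all x (with all integrals absolutely convergent). Then for all a < x < b, g(a)·(b − x)/(b − a) + g(b)·(x − a)/(b − a) = g(x) + ∫_{(a,b)} [((x ∧ y) − a)·(b − (x ∨ y))/(b − a)] · g(y) dμ(y). -/
open MeasureTheory Set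

/-- Green-kernel identity for solutions of the integral equation. -/
theorem stmt0 (μ : Measure ℝ) [IsLocallyFiniteMeasure μ]
    (c κ : ℝ) (g : ℝ → ℝ) (hg : Measurable g)
    (hloc : ∀ r : ℝ, ∃ C : ℝ, ∀ x : ℝ, |x| ≤ r → |g x| ≤ C)
    (hint : ∀ x : ℝ, Integrable (fun y => (max x y - max c y) * g y) μ)
    (heq : ∀ x : ℝ, g x = g c + κ * (x - c) + ∫ y, (max x y - max c y) * g y ∂μ) :
    ∀ a x b : ℝ, a < x → x < b →
      g a * ((b - x) / (b - a)) + g b * ((x - a) / (b - a)) =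
        g x + ∫ y in Ioo a b,
          ((min x y - a) * (b - max x y) / (b - a)) * g y ∂μ := by
  intro a x b hax hxb
  have hab : a < b := hax.trans hxb
  have hba : b - a ≠ 0 := sub_ne_zero.mpr hab.ne'
  have h1 : Integrable (fun y => ((b - x) / (b - a)) * ((max a y - max c y) * g y)) μ :=
    (hint a).const_mul _
  have h2 : Integrable (fun y => ((x - a) / (b - a)) * ((max b y - max c y) * g y)) μ :=
    (hint b).const_mul _
  have h12 : Integrable (fun y => ((b - x) / (b - a)) * ((max a y - max c y) * g y)
      + ((x - a) / (b - a)) * ((max b y - max c y) * g y)) μ := h1.add h2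
  set Ia := ∫ y, (max a y - max c y) * g y ∂μ with hIa
  set Ib := ∫ y, (max b y - max c y) * g y ∂μ with hIb
  set Ix := ∫ y, (max x y - max c y) * g y ∂μ with hIx
  have ha := heq a
  have hb := heq b
  have hx := heq x
  rw [← hIa] at ha
  rw [← hIb] at hb
  rw [← hIx] at hx
  have key0 : ∫ y, (((b - x) / (b - a)) * ((max a y - max c y) * g y)
      + ((x - a) / (b - a)) * ((max b y - max c y) * g y)
      - (max x y - max c y) * g y) ∂μ
      = ((b - x) / (b - a)) * Ia + ((x - a) / (b - a)) * Ib - Ix := by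
    rw [integral_sub h12 (hint x), integral_add h1 h2, integral_const_mul,
      integral_const_mul, hIa, hIb, hIx]
  have key : ∫ y in Ioo a b, ((min x y - a) * (b - max x y) / (b - a)) * g y ∂μ
      = ((b - x) / (b - a)) * Ia + ((x - a) / (b - a)) * Ib - Ix := by
    rw [← key0, ← integral_indicator measurableSet_Ioo]
    congr 1
    funext y
    by_cases hy : y ∈ Ioo a b
    · rw [indicator_of_mem hy]
      obtain ⟨hay, hyb⟩ := hy
      rw [max_eq_right hay.le, max_eq_left hyb.le]
      rcases le_total y x with hyx | hxy
      · rw [max_eq_left hyx, min_eq_right hyx]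
        field_simp
        ring
      · rw [max_eq_right hxy, min_eq_left hxy]
        field_simp
        ring
    · rw [indicator_of_notMem hy]
      rcases not_and_or.mp hy with h | h
      · push_neg at h
        rw [max_eq_left h, max_eq_left (h.trans hab.le), max_eq_left (h.trans hax.le)]
        field_simp
        ring
      · push_neg at h
        have hby : b ≤ y := h
        rw [max_eq_right hby, max_eq_right (hab.le.trans hby),
          max_eq_right (hxb.le.trans hby)]
        field_simp
        ring
  clear_value Ia Ib Ix
  rw [key, ha, hb, hx]
  field_simp
  ring
end

section
/- Let μ be a Radon measure on ℝ, c ∈ ℝ, κ ∈ ℝ, and let g be a continuous function satisfying g(x) = g(c) + κ(x − c) + ∫ (x ∨ y − c ∨ y) g(y) dμ(y) for all x. Then g is convex on every open interval contained in {x : g(x) > 0} and concave on every open interval contained in {x : g(x) < 0}. -/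
open MeasureTheory Set

private lemma stmt1_aux (μ : Measure ℝ)
    (c κ : ℝ) (g : ℝ → ℝ)
    (hint : ∀ x : ℝ, Integrable (fun y => (max x y - max c y) * g y) μ)
    (heq : ∀ x : ℝ, g x = g c + κ * (x - c) + ∫ y, (max x y - max c y) * g y ∂μ)
    (a b : ℝ) (hab : Ioo a b ⊆ {x | 0 < g x}) : ConvexOn ℝ (Ioo a b) g := by
  refine ⟨convex_Ioo a b, ?_⟩
  intro x hx x' hx' t s ht hs hts
  simp only [smul_eq_mul]
  set z := t * x + s * x' with hz
  set Δf : ℝ → ℝ := fun y => (max z y - t * max x y - s * max x' y) * g y with hΔf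
  have key : g z - (t * g x + s * g x') = ∫ y, Δf y ∂μ := by
    have hdecomp : Δf = fun y =>
        ((max z y - max c y) * g y) -
          t * ((max x y - max c y) * g y) - s * ((max x' y - max c y) * g y) := by
      funext y
      simp only [hΔf]
      linear_combination (-(max c y * g y)) * hts
    have hI1 : Integrable
        (fun y => (max z y - max c y) * g y - t * ((max x y - max c y) * g y)) μ :=
      (hint z).sub ((hint x).const_mul t)
    have hI2 : Integrable (fun y => s * ((max x' y - max c y) * g y)) μ :=
      (hint x').const_mul s
    have hI3 : Integrable (fun y => t * ((max x y - max c y) * g y)) μ :=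
      (hint x).const_mul t
    simp only [hdecomp]
    rw [integral_sub hI1 hI2, integral_sub (hint z) hI3,
      integral_const_mul, integral_const_mul]
    have h1 := heq z
    have h2 := heq x
    have h3 := heq x'
    linear_combination h1 - t * h2 - s * h3 + (κ * c - g c) * hts + κ * hz
  have hnonpos : ∫ y, Δf y ∂μ ≤ 0 := by
    refine integral_nonpos fun y => ?_
    simp only [hΔf, Pi.zero_apply]
    by_cases h1 : y ≤ x ∧ y ≤ x'
    · have hy : t * y + s * y = y := by rw [← add_mul, hts, one_mul]
      have e1 := mul_le_mul_of_nonneg_left h1.1 ht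
      have e2 := mul_le_mul_of_nonneg_left h1.2 hs
      have hyz : y ≤ z := by rw [hz]; linarith
      rw [max_eq_left hyz, max_eq_left h1.1, max_eq_left h1.2]
      have : z - t * x - s * x' = 0 := by rw [hz]; ring
      rw [this, zero_mul]
    · by_cases h2 : x ≤ y ∧ x' ≤ y
      · have hy : t * y + s * y = y := by rw [← add_mul, hts, one_mul]
        have e1 := mul_le_mul_of_nonneg_left h2.1 ht
        have e2 := mul_le_mul_of_nonneg_left h2.2 hs
        have hzy : z ≤ y := by rw [hz]; linarith
        rw [max_eq_right hzy, max_eq_right h2.1, max_eq_right h2.2]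
        have : y - t * y - s * y = 0 := by linarith
        rw [this, zero_mul]
      · -- here min x x' < y < max x x', so y ∈ Ioo a b and g y > 0
        push_neg at h1 h2
        have hay : a < y := by
          rcases le_or_gt y x with hyx | hxy
          · have := h1 hyx
            exact lt_trans hx'.1 this
          · exact lt_trans hx.1 hxy
        have hyb : y < b := by
          rcases le_or_gt x y with hxy | hyx
          · have := h2 hxy
            exact lt_trans this hx'.2
          · exact lt_trans hyx hx.2
        have hgy : 0 < g y := hab ⟨hay, hyb⟩
        have hΔ : max z y - t * max x y - s * max x' y ≤ 0 := by
          have hA : z ≤ t * max x y + s * max x' y := by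
            have := mul_le_mul_of_nonneg_left (le_max_left x y) ht
            have := mul_le_mul_of_nonneg_left (le_max_left x' y) hs
            rw [hz]; linarith
          have hB : y ≤ t * max x y + s * max x' y := by
            have hy : t * y + s * y = y := by rw [← add_mul, hts, one_mul]
            have := mul_le_mul_of_nonneg_left (le_max_right x y) ht
            have := mul_le_mul_of_nonneg_left (le_max_right x' y) hs
            linarith
          have := max_le hA hB
          linarith
        nlinarith [mul_nonneg (neg_nonneg.2 hΔ) hgy.le]
  linarith

/-- solutions are convex where positive and concave where negative. -/
theorem stmt1 (μ : Measure ℝ) [IsLocallyFiniteMeasure μ]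
    (c κ : ℝ) (g : ℝ → ℝ) (hg : Continuous g)
    (hint : ∀ x : ℝ, Integrable (fun y => (max x y - max c y) * g y) μ)
    (heq : ∀ x : ℝ, g x = g c + κ * (x - c) + ∫ y, (max x y - max c y) * g y ∂μ) :
    (∀ a b : ℝ, Ioo a b ⊆ {x | 0 < g x} → ConvexOn ℝ (Ioo a b) g) ∧
    (∀ a b : ℝ, Ioo a b ⊆ {x | g x < 0} → ConcaveOn ℝ (Ioo a b) g) := by
  constructor
  · intro a b h
    exact stmt1_aux μ c κ g hint heq a b h
  · intro a b h
    have hint' : ∀ x : ℝ, Integrable (fun y => (max x y - max c y) * (-g) y) μ := by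
      intro x
      have he : (fun y => (max x y - max c y) * (-g) y)
          = fun y => -((max x y - max c y) * g y) := by
        funext y; simp [mul_neg]
      rw [he]
      exact (hint x).neg
    have heq' : ∀ x : ℝ, (-g) x = (-g) c + (-κ) * (x - c) +
        ∫ y, (max x y - max c y) * (-g) y ∂μ := by
      intro x
      have h0 := heq x
      have : ∫ y, (max x y - max c y) * (-g) y ∂μ
          = - ∫ y, (max x y - max c y) * g y ∂μ := by
        rw [← integral_neg]
        congr 1
        funext y
        simp [mul_neg]
      rw [this]
      simp only [Pi.neg_apply]
      linarith
    have hab' : Ioo a b ⊆ {x | 0 < (-g) x} := by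
      intro x hx
      simp only [Pi.neg_apply, mem_setOf_eq, neg_pos]
      exact h hx
    have := stmt1_aux μ c (-κ) (-g) hint' heq' a b hab'
    have := this.neg
    simpa using this
end

section
/- Let μ be a Radon measure on ℝ, c ∈ ℝ, and let g be a continuous function satisfying g(x) = g(c) + ∫ (x ∨ y − c ∨ y) g(y) dμ(y) for all x (i.e. the case κ = 0). Then g does not change sign: either g(x) ≥ 0 for all x, or g(x) ≤ 0 for all x. -/
open MeasureTheory Set

private lemma int2 {μ : Measure ℝ} {c : ℝ} {g : ℝ → ℝ}
    (hint : ∀ x : ℝ, Integrable (fun y => (max x y - max c y) * g y) μ)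
    (x1 x2 : ℝ) : Integrable (fun y => (max x2 y - max x1 y) * g y) μ := by
  exact ((hint x2).sub (hint x1)).congr
    (Filter.Eventually.of_forall fun y => by simp only [Pi.sub_apply]; ring)

private lemma L1 {μ : Measure ℝ} {c : ℝ} {g : ℝ → ℝ}
    (hint : ∀ x : ℝ, Integrable (fun y => (max x y - max c y) * g y) μ)
    (heq : ∀ x : ℝ, g x = g c + ∫ y, (max x y - max c y) * g y ∂μ)
    (x1 x2 : ℝ) :
    g x2 - g x1 = ∫ y, (max x2 y - max x1 y) * g y ∂μ := by
  have h := integral_sub (hint x2) (hint x1)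
  have e : (fun y => (max x2 y - max c y) * g y - (max x1 y - max c y) * g y)
      = fun y => (max x2 y - max x1 y) * g y := by funext y; ring
  rw [e] at h
  rw [heq x2, heq x1, h]
  ring

private lemma L2 {μ : Measure ℝ} {c : ℝ} {g : ℝ → ℝ}
    (hint : ∀ x : ℝ, Integrable (fun y => (max x y - max c y) * g y) μ)
    (heq : ∀ x : ℝ, g x = g c + ∫ y, (max x y - max c y) * g y ∂μ)
    {x1 x2 x3 : ℝ} (h12 : x1 < x2) (h23 : x2 < x3)
    (hpos : ∀ y, x1 < y → y < x3 → 0 ≤ g y) :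
    (g x2 - g x1) * (x3 - x2) ≤ (g x3 - g x2) * (x2 - x1) := by
  rw [L1 hint heq x1 x2, L1 hint heq x2 x3, ← integral_mul_const, ← integral_mul_const]
  apply integral_mono ((int2 hint x1 x2).mul_const _) ((int2 hint x2 x3).mul_const _)
  intro y
  dsimp
  rcases le_or_gt y x1 with h1 | h1
  · have e1 : max x1 y = x1 := max_eq_left h1
    have e2 : max x2 y = x2 := max_eq_left (h1.trans h12.le)
    have e3 : max x3 y = x3 := max_eq_left (h1.trans (h12.trans h23).le)
    rw [e1, e2, e3]
    exact le_of_eq (by ring)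
  rcases le_or_gt x3 y with h3 | h3
  · have e1 : max x1 y = y := max_eq_right ((h12.trans h23).le.trans h3)
    have e2 : max x2 y = y := max_eq_right (h23.le.trans h3)
    have e3 : max x3 y = y := max_eq_right h3
    rw [e1, e2, e3]
    exact le_of_eq (by ring)
  have hgy := hpos y h1 h3
  rcases le_or_gt y x2 with h2 | h2
  · have e2 : max x2 y = x2 := max_eq_left h2
    have e3 : max x3 y = x3 := max_eq_left (h2.trans h23.le)
    have hmx : x1 ≤ max x1 y := le_max_left _ _
    rw [e2, e3]
    nlinarith [mul_nonneg (mul_nonneg (sub_nonneg.mpr h23.le) (sub_nonneg.mpr hmx)) hgy]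
  · have e1 : max x1 y = y := max_eq_right (h12.le.trans h2.le)
    have e2 : max x2 y = y := max_eq_right h2.le
    have hmy : y ≤ max x3 y := le_max_right _ _
    rw [e1, e2]
    nlinarith [mul_nonneg (mul_nonneg (sub_nonneg.mpr h12.le) (sub_nonneg.mpr hmy)) hgy]

private lemma key {μ : Measure ℝ} {c : ℝ} {g : ℝ → ℝ} (hg : Continuous g)
    (hint : ∀ x : ℝ, Integrable (fun y => (max x y - max c y) * g y) μ)
    (heq : ∀ x : ℝ, g x = g c + ∫ y, (max x y - max c y) * g y ∂μ)
    {a x : ℝ} (ha : 0 < g a) (hax : a < x) (hx : g x ≤ 0) : False := by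
  classical
  set S : Set ℝ := Icc a x ∩ {t | g t ≤ 0} with hSdef
  have hSc : IsClosed S := isClosed_Icc.inter (isClosed_le hg continuous_const)
  have hSne : S.Nonempty := ⟨x, ⟨hax.le, le_refl x⟩, hx⟩
  have hSbdd : BddBelow S := ⟨a, fun t ht => ht.1.1⟩
  set p' : ℝ := sInf S with hp'def
  have hp'S : p' ∈ S := hSc.csInf_mem hSne hSbdd
  have hap' : a < p' := by
    rcases lt_or_eq_of_le hp'S.1.1 with h | h
    · exact h
    · exfalso; rw [← h] at hp'S; exact absurd hp'S.2 (not_le.mpr ha)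
  have hposleft : ∀ t, a ≤ t → t < p' → 0 < g t := by
    intro t h1 h2
    by_contra h
    push_neg at h
    have ht : t ∈ S := ⟨⟨h1, h2.le.trans hp'S.1.2⟩, h⟩
    exact absurd (csInf_le hSbdd ht) (not_le.mpr h2)
  have hgp'0 : g p' = 0 := by
    have h0 : Ico a p' ⊆ {t | 0 ≤ g t} := fun t ht => (hposleft t ht.1 ht.2).le
    have hcl : IsClosed {t | 0 ≤ g t} := isClosed_le continuous_const hg
    have h1 : p' ∈ closure (Ico a p') := by
      rw [closure_Ico hap'.ne]
      exact ⟨hap'.le, le_refl _⟩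
    exact le_antisymm hp'S.2 ((hcl.closure_subset_iff.mpr h0) h1)
  by_cases hall : ∀ y, y < p' → 0 < g y
  · -- left-infinite positive component
    have h12 : p' - 2 < p' - 1 := by linarith
    have h23 : p' - 1 < p' := by linarith
    have hnn : 0 ≤ g (p' - 1) - g (p' - 2) := by
      rw [L1 hint heq]
      apply integral_nonneg
      intro y
      dsimp
      rcases lt_or_ge y (p' - 1) with h | h
      · have hw : max (p' - 2) y ≤ max (p' - 1) y := max_le_max (by linarith) le_rfl
        exact mul_nonneg (sub_nonneg.mpr hw) (hall y (by linarith)).le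
      · have e1 : max (p' - 1) y = y := max_eq_right h
        have e2 : max (p' - 2) y = y := max_eq_right (by linarith)
        rw [e1, e2]
        simp
    have hL2 := L2 hint heq h12 h23 (fun y _ hy => (hall y hy).le)
    have hgx2 : 0 < g (p' - 1) := hall _ (by linarith)
    nlinarith [hL2]
  · push_neg at hall
    obtain ⟨y0, hy0p, hy0⟩ := hall
    have hy0a : y0 < a := by
      by_contra h
      push_neg at h
      exact absurd (hposleft y0 h hy0p) (not_lt.mpr hy0)
    set T : Set ℝ := Icc y0 a ∩ {t | g t ≤ 0} with hTdef
    have hTc : IsClosed T := isClosed_Icc.inter (isClosed_le hg continuous_const)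
    have hTne : T.Nonempty := ⟨y0, ⟨le_refl _, hy0a.le⟩, hy0⟩
    have hTbdd : BddAbove T := ⟨a, fun t ht => ht.1.2⟩
    set p : ℝ := sSup T with hpdef
    have hpT : p ∈ T := hTc.csSup_mem hTne hTbdd
    have hpa : p < a := by
      rcases lt_or_eq_of_le hpT.1.2 with h | h
      · exact h
      · exfalso; rw [h] at hpT; exact absurd hpT.2 (not_le.mpr ha)
    have hposright : ∀ t, p < t → t ≤ a → 0 < g t := by
      intro t h1 h2
      by_contra h
      push_neg at h
      have ht : t ∈ T := ⟨⟨hpT.1.1.trans h1.le, h2⟩, h⟩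
      exact absurd (le_csSup hTbdd ht) (not_le.mpr h1)
    have hgp0 : g p = 0 := by
      have h0 : Ioc p a ⊆ {t | 0 ≤ g t} := fun t ht => (hposright t ht.1 ht.2).le
      have hcl : IsClosed {t | 0 ≤ g t} := isClosed_le continuous_const hg
      have h1 : p ∈ closure (Ioc p a) := by
        rw [closure_Ioc hpa.ne]
        exact ⟨le_refl _, hpa.le⟩
      exact le_antisymm hpT.2 ((hcl.closure_subset_iff.mpr h0) h1)
    have hmid : ∀ y, p < y → y < p' → 0 ≤ g y := by
      intro y h1 h2
      rcases le_or_gt y a with h | h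
      · exact (hposright y h1 h).le
      · exact (hposleft y h.le h2).le
    have hL2 := L2 hint heq hpa hap' hmid
    rw [hgp0, hgp'0] at hL2
    nlinarith [mul_pos ha (sub_pos.mpr hap'), mul_pos ha (sub_pos.mpr hpa)]

/-- when κ = 0, solutions do not change sign. -/
theorem stmt2 (μ : Measure ℝ) [IsLocallyFiniteMeasure μ]
    (c : ℝ) (g : ℝ → ℝ) (hg : Continuous g)
    (hint : ∀ x : ℝ, Integrable (fun y => (max x y - max c y) * g y) μ)
    (heq : ∀ x : ℝ, g x = g c + ∫ y, (max x y - max c y) * g y ∂μ) :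
    (∀ x : ℝ, 0 ≤ g x) ∨ (∀ x : ℝ, g x ≤ 0) := by
  by_contra h
  push_neg at h
  obtain ⟨⟨a, ha⟩, ⟨b, hb⟩⟩ := h
  -- ha : g a < 0, hb : 0 < g b  (after push_neg)
  rcases lt_trichotomy b a with hba | hba | hba
  · exact key hg hint heq hb hba ha.le
  · rw [hba] at hb; linarith
  · -- apply key to -g
    have hint' : ∀ x : ℝ, Integrable (fun y => (max x y - max c y) * (-g y)) μ := by
      intro x
      exact ((hint x).neg).congr
        (Filter.Eventually.of_forall fun y => by simp only [Pi.neg_apply]; ring)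
    have heq' : ∀ x : ℝ, (fun y => -g y) x
        = (fun y => -g y) c + ∫ y, (max x y - max c y) * (-g y) ∂μ := by
      intro x
      have e : (fun y => (max x y - max c y) * (-g y))
          = fun y => -((max x y - max c y) * g y) := by funext y; ring
      rw [e, integral_neg]
      have h := heq x
      dsimp
      linarith
    have hga : 0 < (fun y => -g y) a := by dsimp; linarith
    have hgb : (fun y => -g y) b ≤ 0 := by dsimp; linarith
    exact key (hg.neg) hint' heq' hga hba hgb
end

section
/- Let μ be a Radon measure on ℝ, c ∈ ℝ, κ ∈ ℝ, and let g be a continuous locally bounded function satisfying g(x) = g(c) + κ(x − c) + ∫ (x ∨ y − c ∨ y) g(y) dμ(y) for all x. Then g has one-sided derivatives everywhere, with right derivative g'₊(x) = κ + ∫_{(−∞, x]} g(y) dμ(y) and left derivative g'₋(x) = κ + ∫_{(−∞, x)} g(y) dμ(y). In particular, g is differentiable at every x with μ({x}) = 0 or g(x) = 0. -/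
/-!
Subtracting the equation at two points gives
`g b - g a = κ (b - a) + ∫ (max b y - max a y) g y dμ`. For `a < b` the kernel
`max b y - max a y` equals `b - a` on `(-∞, a]`, vanishes on `[b, ∞)` and lies in `[0, b - a]`
on `(a, b]`; hence the difference quotient differs from `κ + ∫_{(-∞, a]} g dμ` by at most
`sup_{[a, b]} |g| · μ (a, b]`, which tends to `0` as `b ↓ a`. Splitting the kernel instead as
`b - a` on `(-∞, b)` plus an error supported on `(a, b)` gives the left derivative at `b`.
The two one-sided derivatives differ by `μ {x} · g x`.
-/

open MeasureTheory Set Filter Topology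

theorem hasDerivWithinAt_of_abs_sub_le {f ε : ℝ → ℝ} {s : Set ℝ} {a L : ℝ}
    (hε : Tendsto ε (𝓝[s] a) (𝓝 0))
    (hf : ∀ᶠ b in 𝓝[s] a, |f b - f a - (b - a) * L| ≤ ε b * |b - a|) :
    HasDerivWithinAt f L s a := by
  rw [hasDerivWithinAt_iff_isLittleO]
  refine Asymptotics.IsBigO.trans_isLittleO (g := fun b => ε b * (b - a)) ?_ ?_
  · refine Asymptotics.IsBigO.of_bound 1 ?_
    filter_upwards [hf] with b hb
    rw [smul_eq_mul, one_mul, Real.norm_eq_abs, Real.norm_eq_abs, abs_mul]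
    exact hb.trans (mul_le_mul_of_nonneg_right (le_abs_self _) (abs_nonneg _))
  · simpa using ((Asymptotics.isLittleO_one_iff ℝ).2 hε).mul_isBigO
      (Asymptotics.isBigO_refl (fun b => b - a) (𝓝[s] a))

theorem tendsto_measureReal_Ioc_nhdsGT (μ : Measure ℝ) [IsLocallyFiniteMeasure μ] (a : ℝ) :
    Tendsto (fun b => μ.real (Ioc a b)) (𝓝[>] a) (𝓝 0) := by
  have h := tendsto_measure_biInter_gt (μ := μ) (s := Ioc a) (a := a)
    (fun _ _ => nullMeasurableSet_Ioc) (fun _ _ _ hij => Ioc_subset_Ioc_right hij)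
    ⟨a + 1, lt_add_one a, measure_Ioc_lt_top.ne⟩
  have hempty : ⋂ r > a, Ioc a r = ∅ := by
    refine eq_empty_iff_forall_notMem.2 fun y hy => ?_
    have hay := (mem_iInter₂.1 hy (a + 1) (lt_add_one a)).1
    linarith [(mem_iInter₂.1 hy ((a + y) / 2) (by linarith)).2]
  rw [hempty, measure_empty] at h
  exact (ENNReal.tendsto_toReal ENNReal.zero_ne_top).comp h

theorem tendsto_measureReal_Ioo_nhdsLT (μ : Measure ℝ) [IsLocallyFiniteMeasure μ] (a : ℝ) :
    Tendsto (fun b => μ.real (Ioo b a)) (𝓝[<] a) (𝓝 0) := by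
  -- continuity from above of `μ` along `b ↑ a` is `tendsto_measure_biInter_gt` in `ℝᵒᵈ`
  have h := tendsto_measure_biInter_gt (μ := μ) (ι := ℝᵒᵈ)
    (s := fun b => Ioo (OrderDual.ofDual b) a) (a := OrderDual.toDual a)
    (fun _ _ => nullMeasurableSet_Ioo) (fun _ _ _ hij => Ioo_subset_Ioo_left hij)
    ⟨OrderDual.toDual (a - 1), OrderDual.toDual_lt_toDual.2 (sub_one_lt a),
      measure_Ioo_lt_top.ne⟩
  have hempty : ⋂ r > OrderDual.toDual a, Ioo (OrderDual.ofDual r) a = ∅ := by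
    refine eq_empty_iff_forall_notMem.2 fun y hy => ?_
    have hya : y < a := (mem_iInter₂.1 hy (OrderDual.toDual (a - 1))
      (OrderDual.toDual_lt_toDual.2 (sub_one_lt a))).2
    have hmid : (a + y) / 2 < y := (mem_iInter₂.1 hy (OrderDual.toDual ((a + y) / 2))
      (OrderDual.toDual_lt_toDual.2 (by linarith))).1
    linarith
  rw [hempty, measure_empty] at h
  exact (ENNReal.tendsto_toReal ENNReal.zero_ne_top).comp h

theorem abs_integral_mul_sub_setIntegral_le {α : Type*} [MeasurableSpace α] {μ : Measure α}
    {K g : α → ℝ} {S T : Set α} {k C : ℝ} (hS : MeasurableSet S) (hT : MeasurableSet T)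
    (hTμ : μ T < ⊤) (hKg : Integrable (fun y => K y * g y) μ) (hgS : IntegrableOn g S μ)
    (hK : ∀ y, |K y - S.indicator (fun _ => k) y| ≤ T.indicator (fun _ => k) y)
    (hC : ∀ y ∈ T, |g y| ≤ C) :
    |∫ y, K y * g y ∂μ - k * ∫ y in S, g y ∂μ| ≤ k * C * μ.real T := by
  rw [← integral_const_mul, ← integral_indicator hS,
    ← integral_sub hKg ((integrable_indicator_iff hS).2 (hgS.const_mul k))]
  calc |∫ y, K y * g y - S.indicator (fun y => k * g y) y ∂μ|
      ≤ ∫ y, T.indicator (fun _ => k * C) y ∂μ := by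
        rw [← Real.norm_eq_abs]
        refine norm_integral_le_of_norm_le ((integrable_indicator_iff hT).2
          (integrableOn_const hTμ.ne)) (ae_of_all _ fun y => ?_)
        have hfac : K y * g y - S.indicator (fun y => k * g y) y
            = (K y - S.indicator (fun _ => k) y) * g y := by
          by_cases hyS : y ∈ S <;> simp [hyS, sub_mul]
        rw [Real.norm_eq_abs, hfac, abs_mul]
        by_cases hyT : y ∈ T
        · have hk := hK y
          rw [indicator_of_mem hyT] at hk ⊢
          exact mul_le_mul hk (hC y hyT) (abs_nonneg _) ((abs_nonneg _).trans hk)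
        · have hk := hK y
          rw [indicator_of_notMem hyT] at hk ⊢
          simp [abs_nonpos_iff.1 hk]
    _ = k * C * μ.real T := by rw [integral_indicator_const _ hT, smul_eq_mul, mul_comm]

theorem abs_max_sub_max_sub_indicator_Iic_le {a b : ℝ} (hab : a ≤ b) (y : ℝ) :
    |max b y - max a y - (Iic a).indicator (fun _ => b - a) y|
      ≤ (Ioc a b).indicator (fun _ => b - a) y := by
  simp only [indicator_apply, mem_Iic, mem_Ioc, max_def]
  split_ifs <;> grind [abs_le]

theorem abs_max_sub_max_sub_indicator_Iio_le {a b : ℝ} (hab : a ≤ b) (y : ℝ) :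
    |max b y - max a y - (Iio b).indicator (fun _ => b - a) y|
      ≤ (Ioo a b).indicator (fun _ => b - a) y := by
  simp only [indicator_apply, mem_Iio, mem_Ioo, max_def]
  split_ifs <;> grind [abs_le]

section IntegralEquation

variable {μ : Measure ℝ} {g : ℝ → ℝ} {κ x : ℝ}

theorem integrableOn_Iic_of_integrable_max_sub_max [IsLocallyFiniteMeasure μ]
    (hg : Continuous g) {c d : ℝ} (hcd : c < d)
    (h : Integrable (fun y => (max d y - max c y) * g y) μ) (a : ℝ) :
    IntegrableOn g (Iic a) μ := by
  have hc : IntegrableOn g (Iic c) μ := by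
    refine IntegrableOn.congr_fun (h.integrableOn.const_mul (d - c)⁻¹)
      (fun y (hy : y ≤ c) => ?_) measurableSet_Iic
    rw [max_eq_left (hy.trans hcd.le), max_eq_left hy, ← mul_assoc,
      inv_mul_cancel₀ (sub_ne_zero.2 hcd.ne'), one_mul]
  exact (hc.union hg.integrableOn_Icc).mono_set Iic_subset_Iic_union_Icc

theorem hasDerivWithinAt_Ici_of_sub_eq_integral [IsLocallyFiniteMeasure μ] (hg : Continuous g)
    (hgx : IntegrableOn g (Iic x) μ)
    (hK : ∀ b, Integrable (fun y => (max b y - max x y) * g y) μ)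
    (hdiff : ∀ b, g b - g x = κ * (b - x) + ∫ y, (max b y - max x y) * g y ∂μ) :
    HasDerivWithinAt g (κ + ∫ y in Iic x, g y ∂μ) (Ici x) x := by
  obtain ⟨C, hC⟩ :=
    isCompact_Icc.exists_bound_of_continuousOn (hg.continuousOn (s := Icc x (x + 1)))
  refine (hasDerivWithinAt_of_abs_sub_le (ε := fun b => C * μ.real (Ioc x b))
    (by simpa using (tendsto_measureReal_Ioc_nhdsGT μ x).const_mul C) ?_).Ici_of_Ioi
  filter_upwards [Ioo_mem_nhdsGT (lt_add_one x)] with b hb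
  have key := abs_integral_mul_sub_setIntegral_le measurableSet_Iic measurableSet_Ioc
    measure_Ioc_lt_top (hK b) hgx (abs_max_sub_max_sub_indicator_Iic_le hb.1.le)
    (fun y hy => hC y ⟨hy.1.le, hy.2.trans hb.2.le⟩)
  rw [abs_of_pos (sub_pos.2 hb.1)]
  convert key using 1
  · congr 1; rw [hdiff b]; ring
  · ring

theorem hasDerivWithinAt_Iic_of_sub_eq_integral [IsLocallyFiniteMeasure μ] (hg : Continuous g)
    (hgx : IntegrableOn g (Iio x) μ)
    (hK : ∀ a, Integrable (fun y => (max x y - max a y) * g y) μ)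
    (hdiff : ∀ a, g x - g a = κ * (x - a) + ∫ y, (max x y - max a y) * g y ∂μ) :
    HasDerivWithinAt g (κ + ∫ y in Iio x, g y ∂μ) (Iic x) x := by
  obtain ⟨C, hC⟩ :=
    isCompact_Icc.exists_bound_of_continuousOn (hg.continuousOn (s := Icc (x - 1) x))
  refine (hasDerivWithinAt_of_abs_sub_le (ε := fun a => C * μ.real (Ioo a x))
    (by simpa using (tendsto_measureReal_Ioo_nhdsLT μ x).const_mul C) ?_).Iic_of_Iio
  filter_upwards [Ioo_mem_nhdsLT (sub_one_lt x)] with a ha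
  have key := abs_integral_mul_sub_setIntegral_le measurableSet_Iio measurableSet_Ioo
    measure_Ioo_lt_top (hK a) hgx (abs_max_sub_max_sub_indicator_Iio_le ha.2.le)
    (fun y hy => hC y ⟨ha.1.le.trans hy.1.le, hy.2.le⟩)
  rw [abs_sub_comm a x, abs_of_pos (sub_pos.2 ha.2), ← abs_neg]
  convert key using 1
  · congr 1; linear_combination hdiff a
  · ring

theorem setIntegral_Iic_eq_setIntegral_Iio_add (hgx : IntegrableOn g (Iic x) μ) :
    ∫ y in Iic x, g y ∂μ = ∫ y in Iio x, g y ∂μ + μ.real {x} * g x := by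
  have h := setIntegral_union (s := Iio x) (t := {x}) (disjoint_singleton_right.2 (lt_irrefl x))
    (measurableSet_singleton x) (hgx.mono_set Iio_subset_Iic_self)
    (hgx.mono_set (singleton_subset_iff.2 self_mem_Iic))
  rwa [Iio_union_right, integral_singleton, smul_eq_mul] at h

end IntegralEquation

theorem stmt4_general (μ : Measure ℝ) [IsLocallyFiniteMeasure μ]
    (c κ : ℝ) (g : ℝ → ℝ) (hg : Continuous g)
    (hint : ∀ x : ℝ, Integrable (fun y => (max x y - max c y) * g y) μ)
    (heq : ∀ x : ℝ, g x = g c + κ * (x - c) + ∫ y, (max x y - max c y) * g y ∂μ) :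
    (∀ x : ℝ, HasDerivWithinAt g (κ + ∫ y in Iic x, g y ∂μ) (Ici x) x) ∧
    (∀ x : ℝ, HasDerivWithinAt g (κ + ∫ y in Iio x, g y ∂μ) (Iic x) x) ∧
    (∀ x : ℝ, (μ {x} = 0 ∨ g x = 0) → DifferentiableAt ℝ g x) := by
  have hIic := integrableOn_Iic_of_integrable_max_sub_max hg (lt_add_one c) (hint (c + 1))
  have hK : ∀ a b, Integrable (fun y => (max b y - max a y) * g y) μ := fun a b =>
    ((hint b).sub (hint a)).congr (ae_of_all _ fun y => by simp only [Pi.sub_apply]; ring)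
  have hdiff : ∀ a b, g b - g a = κ * (b - a) + ∫ y, (max b y - max a y) * g y ∂μ := by
    intro a b
    have hsplit : (fun y => (max b y - max a y) * g y)
        = fun y => (max b y - max c y) * g y - (max a y - max c y) * g y :=
      funext fun y => by ring
    rw [heq a, heq b, hsplit, integral_sub (hint b) (hint a)]
    ring
  have hR x := hasDerivWithinAt_Ici_of_sub_eq_integral hg (hIic x) (hK x) (hdiff x)
  have hL x := hasDerivWithinAt_Iic_of_sub_eq_integral hg ((hIic x).mono_set Iio_subset_Iic_self)
    (fun a => hK a x) (fun a => hdiff a x)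
  refine ⟨hR, hL, fun x hx => ?_⟩
  have hIic_Iio : ∫ y in Iic x, g y ∂μ = ∫ y in Iio x, g y ∂μ := by
    rcases hx with hx | hx <;>
      simp [setIntegral_Iic_eq_setIntegral_Iio_add (hIic x), measureReal_def, hx]
  have hLx := hL x
  rw [← hIic_Iio] at hLx
  exact ((hR x).union hLx).differentiableWithinAt.differentiableAt
    (by rw [Ici_union_Iic]; exact univ_mem)

/-- one-sided derivatives of solutions of the integral equation. -/
theorem stmt4 (μ : Measure ℝ) [IsLocallyFiniteMeasure μ]
    (c κ : ℝ) (g : ℝ → ℝ) (hg : Continuous g)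
    (hloc : ∀ r : ℝ, ∃ C : ℝ, ∀ x : ℝ, |x| ≤ r → |g x| ≤ C)
    (hint : ∀ x : ℝ, Integrable (fun y => (max x y - max c y) * g y) μ)
    (heq : ∀ x : ℝ, g x = g c + κ * (x - c) + ∫ y, (max x y - max c y) * g y ∂μ) :
    (∀ x : ℝ, HasDerivWithinAt g (κ + ∫ y in Iic x, g y ∂μ) (Ici x) x) ∧
    (∀ x : ℝ, HasDerivWithinAt g (κ + ∫ y in Iio x, g y ∂μ) (Iic x) x) ∧
    (∀ x : ℝ, (μ {x} = 0 ∨ g x = 0) → DifferentiableAt ℝ g x) :=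
  stmt4_general μ c κ g hg hint heq
end

section
/- Let μ be a Radon measure on ℝ, c ∈ ℝ, κ ∈ ℝ, and let g be a continuous function satisfying g(x) = g(c) + κ(x − c) + ∫ (x ∨ y − c ∨ y) g(y) dμ(y) for all x ∈ ℝ, with all integrals absolutely convergent. Then for every b ∈ ℝ the limit lim_{x → −∞} g(x)/(b − x) exists and equals −κ. In particular, if g is bounded on some interval (−∞, c], then κ = 0. -/
open MeasureTheory Set Filter

/-- κ is minus the asymptotic slope of g at -∞. -/
theorem stmt5 (μ : Measure ℝ) [IsLocallyFiniteMeasure μ]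
    (c κ : ℝ) (g : ℝ → ℝ) (hg : Continuous g)
    (hint : ∀ x : ℝ, Integrable (fun y => (max x y - max c y) * g y) μ)
    (heq : ∀ x : ℝ, g x = g c + κ * (x - c) + ∫ y, (max x y - max c y) * g y ∂μ) :
    (∀ b : ℝ, Tendsto (fun x => g x / (b - x)) atBot (nhds (-κ))) ∧
    ((∃ C : ℝ, ∀ x ≤ c, |g x| ≤ C) → κ = 0) := by
  -- g is μ-integrable on (-∞, c]
  have hμc : IntegrableOn g (Iic c) μ := by
    have h1 : IntegrableOn (fun y => (max (c-1) y - max c y) * g y) (Iio (c-1)) μ :=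
      (hint (c-1)).integrableOn
    have h2 : IntegrableOn g (Iio (c-1)) μ := by
      refine IntegrableOn.congr_fun (h1.neg) ?_ measurableSet_Iio
      intro y hy
      simp only [mem_Iio] at hy
      have h3 : max (c-1) y = c-1 := max_eq_left hy.le
      have h4 : max c y = c := max_eq_left (by linarith)
      simp [h3, h4]
    have h3 : IntegrableOn g (Icc (c-1) c) μ :=
      hg.continuousOn.integrableOn_Icc
    refine ((h2.union h3).mono_set ?_)
    intro y hy
    simp only [mem_Iic] at hy
    by_cases h : y < c - 1
    · exact Or.inl h
    · exact Or.inr ⟨le_of_not_gt h, hy⟩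
  have key : ∀ b : ℝ, Tendsto (fun x => g x / (b - x)) atBot (nhds (-κ)) := by
    intro b
    have hbx : Tendsto (fun x : ℝ => b - x) atBot atTop := by
      simp only [sub_eq_add_neg]
      exact tendsto_atTop_add_const_left _ b tendsto_neg_atBot_atTop
    have hinv : Tendsto (fun x : ℝ => (b - x)⁻¹) atBot (nhds 0) :=
      hbx.inv_tendsto_atTop
    -- the integral term divided by (b - x) tends to 0
    have hI : Tendsto (fun x => (∫ y, (max x y - max c y) * g y ∂μ) / (b - x))
        atBot (nhds 0) := by
      have hdc := MeasureTheory.tendsto_integral_filter_of_dominated_convergence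
        (μ := μ) (l := atBot)
        (F := fun x y => ((max x y - max c y) * g y) / (b - x))
        (f := fun _ => (0 : ℝ))
        (bound := (Iic c).indicator (fun y => (1 + |c - b|) * |g y|))
        ?_ ?_ ?_ ?_
      · simpa only [integral_div, integral_zero] using hdc
      · refine Eventually.of_forall (fun x => ?_)
        exact ((((continuous_const.max continuous_id).sub
          (continuous_const.max continuous_id)).mul hg).div_const _).aestronglyMeasurable
      · filter_upwards [eventually_le_atBot (min b c - 1)] with x hx
        refine ae_of_all _ (fun y => ?_)
        have hxb : x ≤ b - 1 := by have := min_le_left b c; linarith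
        have hxc : x ≤ c - 1 := by have := min_le_right b c; linarith
        have hbx1 : (1:ℝ) ≤ b - x := by linarith
        by_cases hy : y ≤ c
        · rw [indicator_of_mem (mem_Iic.mpr hy)]
          have hA : |max x y - max c y| ≤ c - x := by
            have h5 : max x y ≤ max c y := max_le_max (by linarith) le_rfl
            have h6 : max c y = c := max_eq_left hy
            have h7 : x ≤ max x y := le_max_left _ _
            rw [abs_sub_comm, abs_of_nonneg (by linarith)]
            linarith
          have hcx : c - x ≤ (1 + |c - b|) * (b - x) := by
            have h8 : c - b ≤ |c - b| := le_abs_self _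
            nlinarith [abs_nonneg (c - b)]
          rw [Real.norm_eq_abs, abs_div, abs_mul, abs_of_pos (by linarith : (0:ℝ) < b - x),
            div_le_iff₀ (by linarith : (0:ℝ) < b - x)]
          nlinarith [abs_nonneg (g y), mul_le_mul_of_nonneg_right hA (abs_nonneg (g y)),
            mul_le_mul_of_nonneg_right hcx (abs_nonneg (g y))]
        · have h5 : max x y = y := max_eq_right (by linarith)
          have h6 : max c y = y := max_eq_right (by linarith)
          rw [h5, h6, sub_self, zero_mul, zero_div, norm_zero]
          refine indicator_nonneg (fun y _ => ?_) y
          positivity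
      · rw [integrable_indicator_iff measurableSet_Iic]
        exact (hμc.abs).const_mul _
      · refine ae_of_all _ (fun y => ?_)
        have hev : ∀ᶠ x in atBot, ((y - max c y) * g y) * (b - x)⁻¹
            = ((max x y - max c y) * g y) / (b - x) := by
          filter_upwards [eventually_le_atBot y] with x hx
          rw [max_eq_right hx, div_eq_mul_inv]
        have hlim : Tendsto (fun x : ℝ => ((y - max c y) * g y) * (b - x)⁻¹)
            atBot (nhds 0) := by
          simpa using hinv.const_mul ((y - max c y) * g y)
        exact hlim.congr' hev
    have h0 : Tendsto (fun x => g c / (b - x)) atBot (nhds 0) := by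
      simp only [div_eq_mul_inv]
      simpa using hinv.const_mul (g c)
    have h2 : Tendsto (fun x => κ * (x - c) / (b - x)) atBot (nhds (-κ)) := by
      have h2a : Tendsto (fun x : ℝ => -κ + κ * (b - c) * (b - x)⁻¹) atBot (nhds (-κ)) := by
        simpa using tendsto_const_nhds.add (hinv.const_mul (κ * (b - c)))
      refine h2a.congr' ?_
      filter_upwards [eventually_le_atBot (b - 1)] with x hx
      have : b - x ≠ 0 := by intro h; rw [sub_eq_zero] at h; linarith
      field_simp
      ring
    have hsum := (h0.add h2).add hI
    rw [zero_add, add_zero] at hsum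
    refine hsum.congr (fun x => ?_)
    rw [← add_div, ← add_div, ← heq x]
  refine ⟨key, fun ⟨C, hC⟩ => ?_⟩
  have hbx : Tendsto (fun x : ℝ => c - x) atBot atTop := by
    simp only [sub_eq_add_neg]
    exact tendsto_atTop_add_const_left _ c tendsto_neg_atBot_atTop
  have hinv : Tendsto (fun x : ℝ => (c - x)⁻¹) atBot (nhds 0) := hbx.inv_tendsto_atTop
  have h0 : Tendsto (fun x => g x / (c - x)) atBot (nhds 0) := by
    refine squeeze_zero_norm' ?_ (by simpa using hinv.const_mul C)
    filter_upwards [eventually_le_atBot (c - 1)] with x hx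
    have hcx : (0:ℝ) < c - x := by linarith
    rw [Real.norm_eq_abs, abs_div, abs_of_pos hcx, div_eq_mul_inv, mul_comm C,
      mul_comm (|g x|)]
    exact mul_le_mul_of_nonneg_left (hC x (by linarith)) (by positivity)
  have := tendsto_nhds_unique (key c) h0
  linarith
end

section
/- Let μ be a finite Borel measure on an interval [ℓ, c], and let f, g : [ℓ, c] → ℝ be bounded measurable functions both satisfying the Volterra equation u(x) = a + ∫_{[ℓ, x]} (x − y) u(y) dμ(y) for all x ∈ [ℓ, c], for the same constant a. Then f = g on [ℓ, c]. -/
/-!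
For `h = f - g` the equation gives `|h x| ≤ ∫_{[ℓ,x]} (x - y) |h y| dμ`. Fix `δ > 0` with
`δ μ[ℓ,c] < 1`. If `h` vanishes below `t`, then on `[t, t + δ)` the kernel `x - y` is at most `δ`
where `h y ≠ 0`, so the bound `M` on `|h|` there improves to `δ μ[ℓ,c] M`; iterating, `h = 0` on
`[t, t + δ)`. Finitely many such strips cover `[ℓ, c]`. Working in strips, rather than with the
usual `μ[ℓ,x]ⁿ / n!` iteration, makes atoms of `μ` harmless, since the kernel vanishes on the
diagonal.
-/

open MeasureTheory Set Filter

namespace Volterra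

theorem abs_setIntegral_sub_mul_le (μ : Measure ℝ) (u : ℝ → ℝ) (ℓ x : ℝ) :
    |∫ y in Icc ℓ x, (x - y) * u y ∂μ| ≤ ∫ y in Icc ℓ x, (x - y) * |u y| ∂μ := by
  calc |∫ y in Icc ℓ x, (x - y) * u y ∂μ| ≤ ∫ y in Icc ℓ x, |(x - y) * u y| ∂μ :=
        abs_integral_le_integral_abs
    _ = ∫ y in Icc ℓ x, (x - y) * |u y| ∂μ := setIntegral_congr_fun measurableSet_Icc
        fun y hy ↦ by rw [abs_mul, abs_of_nonneg (sub_nonneg.2 hy.2)]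

variable {μ : Measure ℝ} [IsFiniteMeasureOnCompacts μ] {ℓ c : ℝ} {h : ℝ → ℝ}

theorem abs_le_of_eq_zero_below {t δ M : ℝ} (hδ : 0 ≤ δ)
    (hh : ∀ x ∈ Icc ℓ c, |h x| ≤ ∫ y in Icc ℓ x, (x - y) * |h y| ∂μ)
    (hzero : ∀ y ∈ Icc ℓ c, y < t → h y = 0)
    (hM : ∀ y ∈ Icc ℓ c, y < t + δ → |h y| ≤ M)
    {x : ℝ} (hx : x ∈ Icc ℓ c) (hxt : x < t + δ) :
    |h x| ≤ δ * M * μ.real (Icc ℓ c) := by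
  have hM0 : 0 ≤ M := (abs_nonneg _).trans (hM x hx hxt)
  have hIcc : Icc ℓ x ⊆ Icc ℓ c := Icc_subset_Icc_right hx.2
  have bound : ∀ y ∈ Icc ℓ x, ‖(x - y) * |h y|‖ ≤ δ * M := by
    intro y hy
    rw [Real.norm_eq_abs, abs_mul, abs_abs, abs_of_nonneg (sub_nonneg.2 hy.2)]
    rcases lt_or_ge y t with hyt | hty
    · rw [hzero y (hIcc hy) hyt, abs_zero, mul_zero]
      positivity
    · exact mul_le_mul (by linarith) (hM y (hIcc hy) (hy.2.trans_lt hxt))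
        (abs_nonneg _) hδ
  calc |h x| ≤ ‖∫ y in Icc ℓ x, (x - y) * |h y| ∂μ‖ := (hh x hx).trans (le_abs_self _)
    _ ≤ δ * M * μ.real (Icc ℓ x) :=
      norm_setIntegral_le_of_norm_le_const isCompact_Icc.measure_lt_top bound
    _ ≤ δ * M * μ.real (Icc ℓ c) := by
      gcongr
      exact isCompact_Icc.measure_ne_top

theorem eq_zero_of_eq_zero_below {t δ C : ℝ} (hδ : 0 ≤ δ) (hδμ : δ * μ.real (Icc ℓ c) < 1)
    (hh : ∀ x ∈ Icc ℓ c, |h x| ≤ ∫ y in Icc ℓ x, (x - y) * |h y| ∂μ)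
    (hC : ∀ x ∈ Icc ℓ c, |h x| ≤ C)
    (hzero : ∀ y ∈ Icc ℓ c, y < t → h y = 0) :
    ∀ x ∈ Icc ℓ c, x < t + δ → h x = 0 := by
  set q := δ * μ.real (Icc ℓ c)
  have hpow : ∀ m : ℕ, ∀ x ∈ Icc ℓ c, x < t + δ → |h x| ≤ C * q ^ m := by
    intro m
    induction m with
    | zero => simpa using fun x hx _ ↦ hC x hx
    | succ m ih =>
      intro x hx hxt
      calc |h x| ≤ δ * (C * q ^ m) * μ.real (Icc ℓ c) :=
            abs_le_of_eq_zero_below hδ hh hzero ih hx hxt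
        _ = C * q ^ (m + 1) := by ring
  intro x hx hxt
  have hq : Tendsto (fun m : ℕ ↦ C * q ^ m) atTop (nhds 0) := by
    simpa using (tendsto_pow_atTop_nhds_zero_of_lt_one (by positivity) hδμ).const_mul C
  exact abs_nonpos_iff.1 (ge_of_tendsto hq (Eventually.of_forall fun m ↦ hpow m x hx hxt))

theorem eq_zero_of_abs_le_setIntegral {C : ℝ}
    (hh : ∀ x ∈ Icc ℓ c, |h x| ≤ ∫ y in Icc ℓ x, (x - y) * |h y| ∂μ)
    (hC : ∀ x ∈ Icc ℓ c, |h x| ≤ C) :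
    ∀ x ∈ Icc ℓ c, h x = 0 := by
  set δ := (μ.real (Icc ℓ c) + 1)⁻¹
  have hδ : 0 < δ := by positivity
  have hδμ : δ * μ.real (Icc ℓ c) < 1 := by
    rw [inv_mul_lt_one₀ (by positivity)]
    linarith
  have hstrip : ∀ n : ℕ, ∀ x ∈ Icc ℓ c, x < ℓ + n * δ → h x = 0 := by
    intro n
    induction n with
    | zero =>
      intro x hx hxℓ
      rw [Nat.cast_zero, zero_mul, add_zero] at hxℓ
      exact absurd hx.1 hxℓ.not_ge
    | succ n ih =>
      simpa [add_mul, add_assoc] using eq_zero_of_eq_zero_below hδ.le hδμ hh hC ih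
  intro x hx
  obtain ⟨n, hn⟩ := exists_nat_gt ((x - ℓ) / δ)
  exact hstrip n x hx (by rw [div_lt_iff₀ hδ] at hn; linarith)

theorem integrableOn_sub_mul {u : ℝ → ℝ} {a b C : ℝ}
    (hu : AEStronglyMeasurable u (μ.restrict (Icc a b))) (hC : ∀ y ∈ Icc a b, |u y| ≤ C) (x : ℝ) :
    IntegrableOn (fun y ↦ (x - y) * u y) (Icc a b) μ :=
  (IntegrableOn.of_bound isCompact_Icc.measure_lt_top hu C
    (ae_restrict_of_forall_mem measurableSet_Icc hC)).continuousOn_mul (g := fun y ↦ x - y)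
    (continuousOn_const.sub continuousOn_id) isCompact_Icc

end Volterra

/-- uniqueness for the Volterra equation. -/
theorem stmt7 (μ : Measure ℝ) [IsFiniteMeasure μ] (ℓ c a : ℝ)
    (f g : ℝ → ℝ) (hfm : Measurable f) (hgm : Measurable g)
    (hfb : ∃ C : ℝ, ∀ x ∈ Icc ℓ c, |f x| ≤ C)
    (hgb : ∃ C : ℝ, ∀ x ∈ Icc ℓ c, |g x| ≤ C)
    (hf : ∀ x ∈ Icc ℓ c, f x = a + ∫ y in Icc ℓ x, (x - y) * f y ∂μ)
    (hg : ∀ x ∈ Icc ℓ c, g x = a + ∫ y in Icc ℓ x, (x - y) * g y ∂μ) :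
    ∀ x ∈ Icc ℓ c, f x = g x := by
  obtain ⟨Cf, hCf⟩ := hfb
  obtain ⟨Cg, hCg⟩ := hgb
  have hdiff : ∀ x ∈ Icc ℓ c, |f x - g x| ≤ ∫ y in Icc ℓ x, (x - y) * |f y - g y| ∂μ := by
    intro x hx
    have hsub : Icc ℓ x ⊆ Icc ℓ c := Icc_subset_Icc_right hx.2
    rw [hf x hx, hg x hx, add_sub_add_left_eq_sub, ← integral_sub
      (Volterra.integrableOn_sub_mul hfm.aestronglyMeasurable (fun y hy ↦ hCf y (hsub hy)) x)
      (Volterra.integrableOn_sub_mul hgm.aestronglyMeasurable (fun y hy ↦ hCg y (hsub hy)) x)]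
    simp_rw [← mul_sub]
    exact Volterra.abs_setIntegral_sub_mul_le μ (f - g) ℓ x
  have hbound : ∀ x ∈ Icc ℓ c, |f x - g x| ≤ Cf + Cg :=
    fun x hx ↦ (abs_sub _ _).trans (add_le_add (hCf x hx) (hCg x hx))
  exact fun x hx ↦ sub_eq_zero.1 (Volterra.eq_zero_of_abs_le_setIntegral hdiff hbound x hx)
end

section
/- Let μ be a finite Borel measure on [ℓ, c], a > 0, and let g : [ℓ, c] → ℝ be a bounded measurable solution of g(x) = a + ∫_{[ℓ, x]} (x − y) g(y) dμ(y). Then g(x) ≥ a for all x, g is nondecreasing, and g is convex on [ℓ, c]. -/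
/-!
On `[ℓ, c]` the kernel is the ramp `(x - t)⁺` integrated over the whole interval, so
`g x = a + ∫ t in [ℓ, c], (x - t)⁺ g t dμ`. Ramps are `1`-Lipschitz, monotone and convex in `x`,
hence `g` is continuous, and it is monotone and convex once `g ≥ 0`. Positivity is a continuous
induction: at the first point `x₀` with `g x₀ ≤ 0`, `g` is positive on `[ℓ, x₀)`, so the integral
in the equation is nonnegative and `g x₀ ≥ a > 0`.
-/

open MeasureTheory Set

section RampIntegral

variable {μ : Measure ℝ} {s : Set ℝ} {f : ℝ → ℝ}

theorem integrableOn_max_sub_mul (hs : IsCompact s) (hf : IntegrableOn f s μ) (x : ℝ) :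
    IntegrableOn (fun t => max (x - t) 0 * f t) s μ :=
  hf.continuousOn_mul (by fun_prop) hs

theorem lipschitzWith_setIntegral_max_sub_mul (hs : IsCompact s) (hf : IntegrableOn f s μ) :
    LipschitzWith (∫ t in s, |f t| ∂μ).toNNReal (fun x => ∫ t in s, max (x - t) 0 * f t ∂μ) := by
  refine LipschitzWith.of_dist_le_mul fun x y => ?_
  rw [Real.coe_toNNReal _ (integral_nonneg fun _ => abs_nonneg _), Real.dist_eq, Real.dist_eq,
    ← integral_sub (integrableOn_max_sub_mul hs hf x) (integrableOn_max_sub_mul hs hf y),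
    mul_comm, ← integral_const_mul, ← Real.norm_eq_abs]
  refine norm_integral_le_of_norm_le (hf.norm.const_mul _) (Filter.Eventually.of_forall fun t => ?_)
  rw [← sub_mul, Real.norm_eq_abs, abs_mul]
  refine mul_le_mul_of_nonneg_right ?_ (abs_nonneg _)
  simpa using abs_max_sub_max_le_abs (x - t) (y - t) 0

theorem monotone_setIntegral_max_sub_mul (hs : IsCompact s) (hf : IntegrableOn f s μ)
    (hf0 : ∀ t ∈ s, 0 ≤ f t) : Monotone (fun x => ∫ t in s, max (x - t) 0 * f t ∂μ) :=
  fun x y hxy => setIntegral_mono_on (integrableOn_max_sub_mul hs hf x)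
    (integrableOn_max_sub_mul hs hf y) hs.measurableSet fun t ht =>
      mul_le_mul_of_nonneg_right (by gcongr) (hf0 t ht)

theorem convexOn_max_sub (t : ℝ) : ConvexOn ℝ univ fun x : ℝ => max (x - t) 0 :=
  ((convexOn_id convex_univ).sub (concaveOn_const t convex_univ)).sup (convexOn_const 0 convex_univ)

theorem convexOn_setIntegral_max_sub_mul (hs : IsCompact s) (hf : IntegrableOn f s μ)
    (hf0 : ∀ t ∈ s, 0 ≤ f t) : ConvexOn ℝ univ (fun x => ∫ t in s, max (x - t) 0 * f t ∂μ) := by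
  refine ⟨convex_univ, fun x _ y _ p q hp hq hpq => ?_⟩
  have hx := (integrableOn_max_sub_mul hs hf x).const_mul p
  have hy := (integrableOn_max_sub_mul hs hf y).const_mul q
  simp only [smul_eq_mul]
  rw [← integral_const_mul, ← integral_const_mul, ← integral_add hx hy]
  refine setIntegral_mono_on (integrableOn_max_sub_mul hs hf _) (hx.add hy) hs.measurableSet
    fun t ht => ?_
  have hramp := (convexOn_max_sub t).2 (mem_univ x) (mem_univ y) hp hq hpq
  simp only [smul_eq_mul] at hramp
  calc max (p * x + q * y - t) 0 * f t ≤ (p * max (x - t) 0 + q * max (y - t) 0) * f t :=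
        mul_le_mul_of_nonneg_right hramp (hf0 t ht)
    _ = _ := by ring

end RampIntegral

section Volterra

variable {μ : Measure ℝ} {f : ℝ → ℝ} {ℓ c x : ℝ}

theorem setIntegral_Icc_sub_mul_eq_setIntegral_max (hx : x ∈ Icc ℓ c) :
    ∫ t in Icc ℓ x, (x - t) * f t ∂μ = ∫ t in Icc ℓ c, max (x - t) 0 * f t ∂μ := by
  rw [setIntegral_eq_of_subset_of_forall_sdiff_eq_zero measurableSet_Icc
      (Icc_subset_Icc_right hx.2) fun t ht => ?_]
  · refine setIntegral_congr_fun measurableSet_Icc fun t ht => ?_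
    simp only [max_eq_left (sub_nonneg.2 ht.2)]
  · have htx : x < t := not_le.1 fun h => ht.2 ⟨ht.1.1, h⟩
    simp [max_eq_right (sub_nonpos.2 htx.le)]

theorem setIntegral_Icc_sub_mul_nonneg (hf : ∀ t ∈ Ico ℓ x, 0 ≤ f t) :
    0 ≤ ∫ t in Icc ℓ x, (x - t) * f t ∂μ := by
  refine setIntegral_nonneg measurableSet_Icc fun t ht => ?_
  rcases ht.2.eq_or_lt with rfl | htx
  · simp
  · exact mul_nonneg (sub_nonneg.2 ht.2) (hf t ⟨ht.1, htx⟩)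

end Volterra

theorem ContinuousOn.forall_pos_of_forall_Ico {α : Type*} [LinearOrder α] [TopologicalSpace α]
    [OrderClosedTopology α] [CompactIccSpace α] {g : α → ℝ} {ℓ c : α}
    (hg : ContinuousOn g (Icc ℓ c)) (hstep : ∀ x ∈ Icc ℓ c, (∀ t ∈ Ico ℓ x, 0 < g t) → 0 < g x) :
    ∀ x ∈ Icc ℓ c, 0 < g x := by
  by_contra! hneg
  obtain ⟨x₀, ⟨hx₀, hgx₀⟩, hmin⟩ := ((isCompact_Icc (a := ℓ) (b := c)).of_isClosed_subset
    (hg.preimage_isClosed_of_isClosed isClosed_Icc isClosed_Iic) inter_subset_left).exists_isLeast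
    hneg
  refine (hstep x₀ hx₀ fun t ht => ?_).not_ge hgx₀
  by_contra! hgt
  exact (hmin ⟨⟨ht.1, ht.2.le.trans hx₀.2⟩, hgt⟩).not_gt ht.2

/-- solutions of the Volterra equation with a > 0 are ≥ a,
nondecreasing and convex on [ℓ, c]. -/
theorem stmt8 (μ : Measure ℝ) [IsFiniteMeasure μ] (ℓ c a : ℝ) (ha : 0 < a)
    (g : ℝ → ℝ) (hgm : Measurable g)
    (hgb : ∃ C : ℝ, ∀ x ∈ Icc ℓ c, |g x| ≤ C)
    (hg : ∀ x ∈ Icc ℓ c, g x = a + ∫ y in Icc ℓ x, (x - y) * g y ∂μ) :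
    (∀ x ∈ Icc ℓ c, a ≤ g x) ∧ MonotoneOn g (Icc ℓ c) ∧ ConvexOn ℝ (Icc ℓ c) g := by
  obtain ⟨C, hC⟩ := hgb
  have hint : IntegrableOn g (Icc ℓ c) μ :=
    Measure.integrableOn_of_bounded (measure_ne_top μ _) hgm.aestronglyMeasurable
      (M := C) ((ae_restrict_mem measurableSet_Icc).mono hC)
  have hrep : EqOn (fun x => a + ∫ t in Icc ℓ c, max (x - t) 0 * g t ∂μ) g (Icc ℓ c) :=
    fun x hx => by rw [hg x hx, setIntegral_Icc_sub_mul_eq_setIntegral_max hx]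
  have hstep : ∀ x ∈ Icc ℓ c, (∀ t ∈ Ico ℓ x, 0 ≤ g t) → a ≤ g x := fun x hx hnonneg => by
    rw [hg x hx]
    exact le_add_of_nonneg_right (setIntegral_Icc_sub_mul_nonneg hnonneg)
  have hcont : ContinuousOn g (Icc ℓ c) :=
    ((lipschitzWith_setIntegral_max_sub_mul isCompact_Icc hint).continuous.const_add
      a).continuousOn.congr hrep.symm
  have hpos : ∀ x ∈ Icc ℓ c, 0 < g x := hcont.forall_pos_of_forall_Ico
    fun x hx hpos => ha.trans_le (hstep x hx fun t ht => (hpos t ht).le)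
  have hg₀ : ∀ t ∈ Icc ℓ c, 0 ≤ g t := fun t ht => (hpos t ht).le
  refine ⟨fun x hx => hstep x hx fun t ht => hg₀ t ⟨ht.1, ht.2.le.trans hx.2⟩, ?_, ?_⟩
  · exact (((monotone_setIntegral_max_sub_mul isCompact_Icc hint hg₀).const_add a).monotoneOn
      _).congr hrep
  · exact (((convexOn_setIntegral_max_sub_mul isCompact_Icc hint hg₀).add_const a).subset
      (subset_univ _) (convex_Icc ℓ c)).congr fun x hx => (add_comm _ _).trans (hrep hx)
end

section
/- Let μ be a Borel measure on ℝ finite on compact sets, f : ℝ → ℝ a μ-integrable function on [a, x], and a < x. Then ∫_a^x (∫_{[a, z]} f(y) dμ(y)) dz = ∫_{[a, x]} (x − y) f(y) dμ(y) (equivalently, with (x − y) replaced by the length of {z ∈ [a,x] : z ≥ y}). -/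
open MeasureTheory Set intervalIntegral

/-!
Both sides are the two iterated integrals of `f y` over the triangle `{a ≤ y ≤ z ≤ x}` with
respect to `dz ⊗ μ`. Integrating first in `y` gives the left side; integrating first in `z`
gives `f y` times the length `x - y` of the slice `[y, x]`. Fubini applies because `f` is
`μ`-integrable on `[a, x]` and the `z`-interval is bounded.
-/

variable {E : Type*} [NormedAddCommGroup E] [NormedSpace ℝ E]

lemma setIntegral_Icc_indicator_Iic (μ : Measure ℝ) {a x z : ℝ} (hz : z ≤ x) (f : ℝ → E) :
    ∫ y in Icc a x, (Iic z).indicator f y ∂μ = ∫ y in Icc a z, f y ∂μ := by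
  rw [setIntegral_indicator measurableSet_Iic, ← Ici_inter_Iic, inter_assoc, Iic_inter_Iic,
    min_eq_right hz, Ici_inter_Iic]

lemma setIntegral_Icc_indicator_Ici_const [CompleteSpace E] {a x y : ℝ} (hy : y ∈ Icc a x)
    (c : E) :
    ∫ z in Icc a x, (Ici y).indicator (fun _ ↦ c) z = (x - y) • c := by
  rw [setIntegral_indicator measurableSet_Ici, ← Ici_inter_Iic, inter_right_comm, Ici_inter_Ici,
    max_eq_right hy.1, Ici_inter_Iic, setIntegral_const, Real.volume_real_Icc_of_le hy.2]

theorem intervalIntegral_setIntegral_Icc_eq_setIntegral_sub_smul [CompleteSpace E]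
    (μ : Measure ℝ) [SFinite μ] {a x : ℝ} (hax : a ≤ x) {f : ℝ → E}
    (hf : IntegrableOn f (Icc a x) μ) :
    ∫ z in a..x, (∫ y in Icc a z, f y ∂μ) = ∫ y in Icc a x, (x - y) • f y ∂μ := by
  set triangle : Set (ℝ × ℝ) := {p | p.2 ≤ p.1}
  set F : ℝ × ℝ → E := triangle.indicator (fun p ↦ f p.2)
  have hF : Integrable F ((volume.restrict (Icc a x)).prod (μ.restrict (Icc a x))) :=
    (hf.comp_snd _).indicator (measurableSet_le measurable_snd measurable_fst)
  have h_left : ∫ z in a..x, (∫ y in Icc a z, f y ∂μ)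
      = ∫ z in Icc a x, ∫ y in Icc a x, F (z, y) ∂μ := by
    rw [integral_of_le hax, ← integral_Icc_eq_integral_Ioc]
    exact setIntegral_congr_fun measurableSet_Icc fun z hz ↦
      (setIntegral_Icc_indicator_Iic μ hz.2 f).symm
  have h_right : ∫ y in Icc a x, (∫ z in Icc a x, F (z, y)) ∂μ
      = ∫ y in Icc a x, (x - y) • f y ∂μ :=
    setIntegral_congr_fun measurableSet_Icc fun y hy ↦
      setIntegral_Icc_indicator_Ici_const hy (f y)
  rw [h_left, ← h_right, integral_integral_swap (f := fun z y ↦ F (z, y)) hF]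

/-- Fubini-type identity turning an iterated integral into an
integral against the Volterra kernel (x - y). -/
theorem stmt9 (μ : Measure ℝ) [IsLocallyFiniteMeasure μ] (a x : ℝ) (hax : a < x)
    (f : ℝ → ℝ) (hf : IntegrableOn f (Icc a x) μ) :
    ∫ z in a..x, (∫ y in Icc a z, f y ∂μ) =
      ∫ y in Icc a x, (x - y) * f y ∂μ :=
  intervalIntegral_setIntegral_Icc_eq_setIntegral_sub_smul μ hax.le hf
end
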